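/- arXiv:1708.08509 — 5 statements merged into one kernel-verified Lean document; each statement's English description precedes it below -/
import Mathlib

section
/- Let F be a group, let G be a finite abelian irreducible F-group, and let 𝔪 be a natural number such that there exists x ∈ G^𝔪 with [x]_F = G^𝔪 but there exists no y ∈ G^{𝔪+1} with [y]_F = G^{𝔪+1}. Then h_F(G)^𝔪 = |G|. -/
section FGroupDefs

variable (F : Type*) [Group F]

/-- A subgroup of an `F`-group is a *normal `F`-subgroup* if it is normal and
stable under the `F`-action. -/
def IsNormalFSubgroup {G : Type*} [Group G] [MulDistribMulAction F G]
    (H : Subgroup G) : Prop :=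
  H.Normal ∧ ∀ (f : F) (x : G), x ∈ H → f • x ∈ H

/-- An *irreducible `F`-group* is a nontrivial `F`-group whose only normal
`F`-subgroups are the trivial subgroup and the whole group. -/
def IsIrreducibleFGroup (G : Type*) [Group G] [MulDistribMulAction F G] : Prop :=
  Nontrivial G ∧ ∀ H : Subgroup G, IsNormalFSubgroup F H → H = ⊥ ∨ H = ⊤

/-- `[s]_F`: the smallest normal `F`-subgroup containing the set `s`. -/
def normalFClosure {G : Type*} [Group G] [MulDistribMulAction F G] (s : Set G) :
    Subgroup G :=
  sInf {H : Subgroup G | IsNormalFSubgroup F H ∧ s ⊆ H}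

/-- A group homomorphism is an `F`-group morphism if it commutes with the `F`-actions. -/
def IsFHom {G G' : Type*} [Group G] [Group G'] [MulDistribMulAction F G]
    [MulDistribMulAction F G'] (φ : G →* G') : Prop :=
  ∀ (f : F) (x : G), φ (f • x) = f • φ x

/-- `h_F(G)`: the number of `F`-group endomorphisms of `G`. -/
noncomputable def hF (G : Type*) [Group G] [MulDistribMulAction F G] : ℕ :=
  Nat.card {φ : G →* G // IsFHom F φ}

/-- Two `F`-groups are isomorphic if there is a bijective group homomorphism
between them commuting with the `F`-actions. -/
def IsFIso (G G' : Type*) [Group G] [Group G'] [MulDistribMulAction F G]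
    [MulDistribMulAction F G'] : Prop :=
  ∃ e : G ≃* G', ∀ (f : F) (x : G), e (f • x) = f • e x

end FGroupDefs

/-!
Written additively, an abelian irreducible `F`-group `G` is a simple module over the subring
`R` of `End(G)` generated by `F` (the image of `ℤ[F]`), and its `F`-endomorphisms are exactly
`D = End_R(G)`, a division ring by Schur's lemma, so `h_F(G) = |D|`. A tuple `x ∈ G^m`
generates `G^m` as an `F`-group iff it generates it as an `R`-module, and by the Jacobson
density theorem this happens iff its coordinates are linearly independent over `D`. Hence the
largest such `m` is `dim_D G`, and `|G| = |D| ^ dim_D G`.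
-/

theorem LinearIndependent.exists_linearMap_apply_eq {K V V' ι : Type*} [DivisionRing K]
    [AddCommGroup V] [Module K V] [AddCommGroup V'] [Module K V'] {v : ι → V}
    (hv : LinearIndependent K v) (w : ι → V') : ∃ f : V →ₗ[K] V', ∀ i, f (v i) = w i := by
  obtain ⟨f, hf⟩ := LinearMap.exists_extend (Finsupp.linearCombination K w ∘ₗ hv.repr)
  refine ⟨f, fun i => ?_⟩
  have := LinearMap.congr_fun hf ⟨v i, Submodule.subset_span ⟨i, rfl⟩⟩
  simpa [hv.repr_eq_single i ⟨v i, _⟩ rfl] using this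

namespace IsSimpleModule

open Module

variable {R M : Type*} [Ring R] [AddCommGroup M] [Module R M] [IsSimpleModule R M]

theorem span_singleton_eq_top_iff_linearIndependent {ι : Type*} [Finite ι] (v : ι → M) :
    R ∙ v = ⊤ ↔ LinearIndependent (End R M) v := by
  classical
  have := Fintype.ofFinite ι
  constructor
  · intro hv
    rw [Fintype.linearIndependent_iff]
    intro c hc i
    ext a
    obtain ⟨r, hr⟩ : ∃ r : R, r • v = Pi.single i a :=
      Submodule.mem_span_singleton.1 (hv ▸ Submodule.mem_top)
    calc c i a = ∑ j, c j ((Pi.single i a : ι → M) j) := by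
          rw [Finset.sum_eq_single i (fun j _ hj => by simp [hj]) (by simp)]
          simp
      _ = r • ∑ j, c j • v j := by simp [← hr, Finset.smul_sum]
      _ = 0 := by rw [hc, smul_zero]
  · intro hv
    refine eq_top_iff.2 fun w _ => ?_
    obtain ⟨f, hf⟩ := hv.exists_linearMap_apply_eq w
    obtain ⟨r, hr⟩ := jacobson_density f (Finset.univ.image v)
    exact Submodule.mem_span_singleton.2 ⟨r, funext fun i => by simp [← hf, hr (v i) (by simp)]⟩

variable [Module.Finite (End R M) M] {m : ℕ}

theorem finrank_end_eq (hgen : ∃ v : Fin m → M, R ∙ v = ⊤)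
    (hnot : ¬ ∃ v : Fin (m + 1) → M, R ∙ v = ⊤) : finrank (End R M) M = m := by
  classical
  refine le_antisymm ?_ ?_
  · by_contra! h
    obtain ⟨v, hv⟩ := exists_linearIndependent_of_le_finrank h
    exact hnot ⟨v, (span_singleton_eq_top_iff_linearIndependent v).2 hv⟩
  · obtain ⟨v, hv⟩ := hgen
    simpa using ((span_singleton_eq_top_iff_linearIndependent v).1 hv).fintype_card_le_finrank

theorem natCard_end_pow_eq_natCard (hgen : ∃ v : Fin m → M, R ∙ v = ⊤)
    (hnot : ¬ ∃ v : Fin (m + 1) → M, R ∙ v = ⊤) : Nat.card (End R M) ^ m = Nat.card M := by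
  classical
  rw [← finrank_end_eq hgen hnot]
  exact (Module.natCard_eq_pow_finrank (K := End R M)).symm

end IsSimpleModule

section FGroup

variable {F G : Type*} [Group F] [Group G] [MulDistribMulAction F G]

theorem subset_normalFClosure (s : Set G) : s ⊆ normalFClosure F s :=
  fun _ hx => Subgroup.mem_sInf.2 fun _ hH => hH.2 hx

theorem normalFClosure_le {s : Set G} {H : Subgroup G} (hH : IsNormalFSubgroup F H)
    (hs : s ⊆ H) : normalFClosure F s ≤ H :=
  sInf_le ⟨hH, hs⟩

theorem smul_mem_normalFClosure {s : Set G} (f : F) {x : G} (hx : x ∈ normalFClosure F s) :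
    f • x ∈ normalFClosure F s :=
  Subgroup.mem_sInf.2 fun H hH => hH.1.2 f x (Subgroup.mem_sInf.1 hx H hH)

end FGroup

open Additive

section CommFGroup

variable {F G : Type*} [Group F] [CommGroup G] [MulDistribMulAction F G]

theorem isNormalFSubgroup_of_smul_mem {H : Subgroup G} (hH : ∀ (f : F) x, x ∈ H → f • x ∈ H) :
    IsNormalFSubgroup F H :=
  ⟨H.normal_of_isMulCommutative, hH⟩

variable (F G) in
def actionSubring : Subring (AddMonoid.End (Additive G)) :=
  Subring.closure
    (Set.range fun f : F => monoidEndToAdditive G (MulDistribMulAction.toMonoidEnd F G f))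

variable (G) in
def actionSubring.of (f : F) : actionSubring F G :=
  ⟨_, Subring.subset_closure ⟨f, rfl⟩⟩

theorem IsIrreducibleFGroup.isSimpleModule (hirr : IsIrreducibleFGroup F G) :
    IsSimpleModule (actionSubring F G) (Additive G) := by
  have : Nontrivial G := hirr.1
  refine (isSimpleModule_iff _ _).2 { eq_bot_or_eq_top := fun p => ?_ }
  have hp := hirr.2 (AddSubgroup.toSubgroup' p.toAddSubgroup) <|
    isNormalFSubgroup_of_smul_mem fun f x hx => p.smul_mem (actionSubring.of G f) hx
  refine hp.imp (fun h => ?_) (fun h => ?_) <;>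
    exact Submodule.toAddSubgroup_injective (AddSubgroup.toSubgroup'.injective (by simpa using h))

theorem IsFHom.toAdditive_smul {φ : G →* G} (hφ : IsFHom F φ) (r : actionSubring F G)
    (a : Additive G) : MonoidHom.toAdditive φ (r • a) = r • MonoidHom.toAdditive φ a := by
  let ψ : AddMonoid.End (Additive G) := MonoidHom.toAdditive φ
  have hr : (r : AddMonoid.End (Additive G)) ∈ Subring.centralizer {ψ} := by
    refine Subring.closure_le.2 ?_ r.2
    rintro _ ⟨f, rfl⟩
    rw [SetLike.mem_coe, Subring.mem_centralizer_iff]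
    rintro _ rfl
    ext b
    exact congrArg ofMul (hφ f b.toMul)
  exact DFunLike.congr_fun (Subring.mem_centralizer_iff.1 hr ψ rfl) a

variable (F G) in
def fHomEquivEnd : {φ : G →* G // IsFHom F φ} ≃ Module.End (actionSubring F G) (Additive G) where
  toFun φ := { MonoidHom.toAdditive φ.1 with map_smul' := φ.2.toAdditive_smul }
  invFun L := ⟨MonoidHom.toAdditive.symm L.toAddMonoidHom, fun f x =>
    congrArg toMul (L.map_smul (actionSubring.of G f) (ofMul x))⟩
  left_inv _ := rfl
  right_inv _ := rfl

theorem hF_eq_natCard_end : hF F G = Nat.card (Module.End (actionSubring F G) (Additive G)) :=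
  Nat.card_congr (fHomEquivEnd F G)

theorem actionSubring_smul_mem {ι : Type*} {N : Subgroup (ι → G)}
    (hN : ∀ (f : F) y, y ∈ N → f • y ∈ N) (r : actionSubring F G) {y : ι → G} (hy : y ∈ N) :
    (fun i => toMul (r • ofMul (y i))) ∈ N := by
  obtain ⟨r, hr⟩ := r
  induction hr using Subring.closure_induction generalizing y with
  | mem _ h => obtain ⟨f, rfl⟩ := h; exact hN f y hy
  | zero => exact N.one_mem
  | one => exact hy
  | add r s _ _ hr hs => exact N.mul_mem (hr hy) (hs hy)
  | neg r _ hr => exact N.inv_mem (hr hy)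
  | mul r s _ _ hr hs => exact hr (hs hy)

theorem normalFClosure_singleton_eq_top_iff {ι : Type*} (x : ι → G) :
    normalFClosure F {x} = ⊤ ↔ actionSubring F G ∙ (fun i => ofMul (x i)) = ⊤ := by
  set p := actionSubring F G ∙ (fun i => ofMul (x i))
  constructor
  · intro hx
    let S : Subgroup (ι → G) :=
      { carrier := {y | (fun i => ofMul (y i)) ∈ p}
        mul_mem' := fun ha hb => p.add_mem ha hb
        one_mem' := p.zero_mem
        inv_mem' := p.neg_mem }
    have hS : normalFClosure F {x} ≤ S :=
      normalFClosure_le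
        (isNormalFSubgroup_of_smul_mem fun f y hy => p.smul_mem (actionSubring.of G f) hy)
        (Set.singleton_subset_iff.2 (Submodule.mem_span_singleton_self _ : _ ∈ p))
    rw [hx, top_le_iff] at hS
    exact eq_top_iff.2 fun w _ => (hS ▸ Subgroup.mem_top (fun i => toMul (w i)) : _ ∈ S)
  · intro hp
    refine eq_top_iff.2 fun y _ => ?_
    obtain ⟨r, hr⟩ : ∃ r : actionSubring F G, r • (fun i => ofMul (x i)) = fun i => ofMul (y i) :=
      Submodule.mem_span_singleton.1 (hp ▸ Submodule.mem_top : (fun i => ofMul (y i)) ∈ p)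
    have hy : y = fun i => toMul (r • ofMul (x i)) :=
      funext fun i => congrArg toMul (congrFun hr i).symm
    rw [hy]
    exact actionSubring_smul_mem (fun f _ => smul_mem_normalFClosure f) r
      (subset_normalFClosure {x} rfl)

end CommFGroup

/-- if `𝔪` is the largest number such that `G^𝔪` can be generated by a
single element as an `F`-group, then `h_F(G)^𝔪 = |G|`. -/
theorem hF_pow_eq_card
    {F G : Type*} [Group F] [Group G] [MulDistribMulAction F G] [Finite G]
    (hab : ∀ a b : G, a * b = b * a)
    (hirr : IsIrreducibleFGroup F G) (𝔪 : ℕ)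
    (hgen : ∃ x : Fin 𝔪 → G, normalFClosure F {x} = ⊤)
    (hnot : ¬ ∃ y : Fin (𝔪 + 1) → G, normalFClosure F {y} = ⊤) :
    hF F G ^ 𝔪 = Nat.card G := by
  let _ : CommGroup G := { ‹Group G› with mul_comm := hab }
  have := hirr.isSimpleModule
  rw [hF_eq_natCard_end, Nat.card_congr (Additive.ofMul (α := G))]
  refine IsSimpleModule.natCard_end_pow_eq_natCard ?_ ?_
  · obtain ⟨x, hx⟩ := hgen
    exact ⟨_, (normalFClosure_singleton_eq_top_iff x).1 hx⟩
  · rintro ⟨v, hv⟩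
    exact hnot ⟨fun i => toMul (v i), (normalFClosure_singleton_eq_top_iff _).2 hv⟩
end

section
/- Let F be a group, let G₁,…,G_m be irreducible F-groups, and let N be a subgroup of ∏_{i=1}^m G_i that is stable under the F-action and whose image under each coordinate projection is either the trivial subgroup or all of G_i. Then there exists a subset J ⊆ {1,…,m} such that the projection ∏_{i=1}^m G_i → ∏_{i∈J} G_i restricts to a group isomorphism from N onto ∏_{i∈J} G_i. -/
/-!
Choose `J` maximal among the sets of coordinates onto which `N` projects surjectively
(`∅` is one). If some `x ∈ N` were trivial on `J` but not at a coordinate `k`, the `k`-th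
coordinates of the elements of `N` that are trivial on `J` would form a nontrivial normal
`F`-subgroup of `G k` (normal because `N` projects onto `G k`), hence all of `G k` by
irreducibility. Correcting preimages over `J` by such elements shows that `N` also projects onto
`insert k J`, so `k ∈ J` by maximality, contradicting `x k ≠ 1`. So the projection onto `J` is
also injective on `N`.
-/

namespace Pi

variable {ι : Type*} (G : ι → Type*) [∀ i, Group (G i)]

def restrictMonoidHom (J : Set ι) : (∀ i, G i) →* ∀ i : J, G i :=
  MonoidHom.pi fun i => evalMonoidHom G i

@[simp]
theorem restrictMonoidHom_apply (J : Set ι) (x : ∀ i, G i) (i : J) :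
    restrictMonoidHom G J x i = x i :=
  rfl

end Pi

namespace Subgroup

open Pi

variable {ι : Type*} {G : ι → Type*} [∀ i, Group (G i)] (N : Subgroup (∀ i, G i))

def restrictCoords (J : Set ι) : N →* ∀ i : J, G i :=
  (restrictMonoidHom G J).comp N.subtype

def sliceAt (J : Set ι) (k : ι) : Subgroup (G k) :=
  (N ⊓ (restrictMonoidHom G J).ker).map (evalMonoidHom G k)

variable {N}

theorem sliceAt_normal {J : Set ι} {k : ι} (hk : N.map (evalMonoidHom G k) = ⊤) :
    (N.sliceAt J k).Normal := by
  constructor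
  rintro _ ⟨x, ⟨hxN, hxJ⟩, rfl⟩ g
  obtain ⟨y, hyN, rfl⟩ : g ∈ N.map (evalMonoidHom G k) := hk ▸ mem_top g
  exact ⟨y * x * y⁻¹, ⟨N.mul_mem (N.mul_mem hyN hxN) (N.inv_mem hyN),
    (MonoidHom.normal_ker _).conj_mem x hxJ y⟩, rfl⟩

theorem smul_mem_sliceAt {F : Type*} [Monoid F] [∀ i, MulDistribMulAction F (G i)]
    (hN : ∀ (f : F) (x : ∀ i, G i), x ∈ N → f • x ∈ N) {J : Set ι} {k : ι} (f : F)
    {g : G k} (hg : g ∈ N.sliceAt J k) : f • g ∈ N.sliceAt J k := by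
  obtain ⟨x, ⟨hxN, hxJ⟩, rfl⟩ := hg
  refine ⟨f • x, ⟨hN f x hxN, ?_⟩, rfl⟩
  ext i
  have hxi : x i = 1 := congrFun (MonoidHom.mem_ker.1 hxJ) i
  simp [hxi]

theorem sliceAt_eq_top {F : Type*} [Group F] [∀ i, MulDistribMulAction F (G i)]
    {k : ι} (hirr : IsIrreducibleFGroup F (G k))
    (hN : ∀ (f : F) (x : ∀ i, G i), x ∈ N → f • x ∈ N)
    (hk : N.map (evalMonoidHom G k) = ⊤) {J : Set ι} {x : ∀ i, G i} (hxN : x ∈ N)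
    (hxJ : x ∈ (restrictMonoidHom G J).ker) (hxk : x k ≠ 1) : N.sliceAt J k = ⊤ :=
  (hirr.2 _ ⟨sliceAt_normal hk, fun f _ => smul_mem_sliceAt hN f⟩).resolve_left
    fun hbot => hxk <| mem_bot.1 <| hbot ▸ ⟨x, ⟨hxN, hxJ⟩, rfl⟩

theorem surjective_restrictCoords_insert {J : Set ι} {k : ι}
    (hJ : Function.Surjective (N.restrictCoords J)) (hk : N.sliceAt J k = ⊤) :
    Function.Surjective (N.restrictCoords (insert k J)) := by
  intro h
  obtain ⟨⟨y, hyN⟩, hy⟩ := hJ fun i => h ⟨i, Set.mem_insert_of_mem k i.2⟩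
  obtain ⟨z, ⟨hzN, hzJ⟩, hzk⟩ :
      (y k)⁻¹ * h ⟨k, Set.mem_insert k J⟩ ∈ N.sliceAt J k := hk ▸ mem_top _
  refine ⟨⟨y * z, N.mul_mem hyN hzN⟩, funext fun ⟨i, hi⟩ => ?_⟩
  by_cases hik : i = k
  · subst hik
    simp_all [restrictCoords]
  · have hiJ : i ∈ J := hi.resolve_left hik
    have hyi := congrFun hy ⟨i, hiJ⟩
    have hzi := congrFun (MonoidHom.mem_ker.1 hzJ) ⟨i, hiJ⟩
    simp_all [restrictCoords]

theorem exists_bijective_restrictCoords [Finite ι] {F : Type*} [Group F]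
    [∀ i, MulDistribMulAction F (G i)] (hirr : ∀ i, IsIrreducibleFGroup F (G i))
    (hN : ∀ (f : F) (x : ∀ i, G i), x ∈ N → f • x ∈ N)
    (hproj : ∀ i, N.map (evalMonoidHom G i) = ⊥ ∨ N.map (evalMonoidHom G i) = ⊤) :
    ∃ J : Set ι, Function.Bijective (N.restrictCoords J) := by
  obtain ⟨J, hJ⟩ := (Set.toFinite {J : Set ι | Function.Surjective (N.restrictCoords J)}
    ).exists_maximal ⟨∅, fun _ => ⟨1, funext fun i => i.2.elim⟩⟩
  refine ⟨J, (injective_iff_map_eq_one _).2 fun ⟨x, hxN⟩ hxJ => ?_, hJ.prop⟩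
  replace hxJ : x ∈ (restrictMonoidHom G J).ker := hxJ
  refine Subtype.ext <| funext fun k => by_contra fun hxk => ?_
  have hk : N.map (evalMonoidHom G k) = ⊤ := (hproj k).resolve_left fun hbot =>
    hxk <| mem_bot.1 <| hbot ▸ ⟨x, hxN, rfl⟩
  have hkJ : k ∈ J := hJ.mem_of_prop_insert <|
    surjective_restrictCoords_insert hJ.prop (sliceAt_eq_top (hirr k) hN hk hxN hxJ hxk)
  exact hxk (congrFun hxJ ⟨k, hkJ⟩)

end Subgroup

/-- Lemma on subgroups of products of irreducible `F`-groups: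
an `F`-stable subgroup of `∏ᵢ Gᵢ` projecting onto `1` or `Gᵢ` in each coordinate is
isomorphic, via a coordinate projection, to a subproduct. -/
theorem subgroup_of_product_proj_iso
    {F : Type*} [Group F] {m : ℕ} (G : Fin m → Type*)
    [∀ i, Group (G i)] [∀ i, MulDistribMulAction F (G i)]
    (hirr : ∀ i, IsIrreducibleFGroup F (G i))
    (N : Subgroup (∀ i, G i))
    (hstab : ∀ (f : F) (x : ∀ i, G i), x ∈ N → f • x ∈ N)
    (hproj : ∀ i, Subgroup.map (Pi.evalMonoidHom G i) N = ⊥ ∨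
        Subgroup.map (Pi.evalMonoidHom G i) N = ⊤) :
    ∃ (J : Set (Fin m)) (e : N ≃* (∀ i : J, G i)),
      ∀ (x : N) (i : J), e x i = (x : ∀ i, G i) i := by
  obtain ⟨J, hJ⟩ := N.exists_bijective_restrictCoords hirr hstab hproj
  exact ⟨J, MulEquiv.ofBijective _ hJ, fun _ _ => rfl⟩
end

section
/- Let F be a group, let G₁,…,G_k be irreducible F-groups such that G_i and G_j are not isomorphic as F-groups for i ≠ j, let m₁,…,m_k be non-negative integers, and let N be a normal F-subgroup of ∏_{i=1}^k G_i^{m_i}. For each i, let N_i be the image of N under the projection onto the block G_i^{m_i}. Then each N_i is a normal F-subgroup of G_i^{m_i}, and N = ∏_{i=1}^k N_i; that is, an element of ∏_{i=1}^k G_i^{m_i} lies in N if and only if for every i its projection to the block G_i^{m_i} lies in N_i. -/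
/-!
A normal `F`-subgroup `N` of `∏ p, H p` splits along any set `P` of coordinates that is a union
of `F`-isomorphism classes. Removing the coordinates `q ∉ P` one at a time (passing from `N` to
`N ⊔ H q`) reduces this to splitting off `q` from an element supported on `P ∪ {q}`. As
`{h | Pi.mulSingle q h ∈ N}` is `1` or `H q`, the only obstruction is that the part of `N`
supported on `P ∪ {q}` is the graph of an `F`-homomorphism from a normal `F`-subgroup of
`∏_{p ∈ P} H p` onto `H q`. Such a graph can be pushed down coordinate by coordinate until it
lies over a single `H p`; there both projections are bijective, so `H q ≅ H p`, which is
excluded.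
-/

section NormalFSubgroup

variable {F G G' : Type*} [Group F] [Group G] [Group G'] [MulDistribMulAction F G]
  [MulDistribMulAction F G']

namespace IsNormalFSubgroup

lemma comap {K : Subgroup G'} (hK : IsNormalFSubgroup F K) {φ : G →* G'} (hφ : IsFHom F φ) :
    IsNormalFSubgroup F (K.comap φ) :=
  ⟨hK.1.comap φ, fun f x hx => by
    simpa only [Subgroup.mem_comap, hφ f x] using hK.2 f (φ x) hx⟩

lemma map {K : Subgroup G} (hK : IsNormalFSubgroup F K) {φ : G →* G'} (hφ : IsFHom F φ)
    (hsurj : Function.Surjective φ) : IsNormalFSubgroup F (K.map φ) := by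
  refine ⟨hK.1.map φ hsurj, ?_⟩
  rintro f _ ⟨x, hx, rfl⟩
  exact ⟨f • x, hK.2 f x hx, hφ f x⟩

lemma inf {K K' : Subgroup G} (hK : IsNormalFSubgroup F K) (hK' : IsNormalFSubgroup F K') :
    IsNormalFSubgroup F (K ⊓ K') :=
  ⟨@Subgroup.normal_inf_normal _ _ K K' hK.1 hK'.1,
    fun f x hx => ⟨hK.2 f x hx.1, hK'.2 f x hx.2⟩⟩

lemma sup {K K' : Subgroup G} (hK : IsNormalFSubgroup F K) (hK' : IsNormalFSubgroup F K') :
    IsNormalFSubgroup F (K ⊔ K') := by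
  have := hK.1
  have := hK'.1
  refine ⟨Subgroup.sup_normal K K', fun f x hx => ?_⟩
  obtain ⟨y, hy, z, hz, rfl⟩ := Subgroup.mem_sup_of_normal_right.mp hx
  rw [smul_mul']
  exact Subgroup.mul_mem_sup (hK.2 f y hy) (hK'.2 f z hz)

end IsNormalFSubgroup

lemma isFIso_of_bijective_restrict {L : Subgroup G}
    (hL : ∀ (f : F) (x : G), x ∈ L → f • x ∈ L) {A B : Type*} [Group A] [Group B]
    [MulDistribMulAction F A] [MulDistribMulAction F B] {φ : G →* A} {ψ : G →* B}
    (hφ : IsFHom F φ) (hψ : IsFHom F ψ) (hφL : Function.Bijective (φ.comp L.subtype))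
    (hψL : Function.Bijective (ψ.comp L.subtype)) :
    IsFIso F A B := by
  let eφ := MulEquiv.ofBijective _ hφL
  refine ⟨eφ.symm.trans (MulEquiv.ofBijective _ hψL), fun f a => ?_⟩
  obtain ⟨l, rfl⟩ := eφ.surjective a
  have hfl : f • eφ l = eφ ⟨f • l, hL f l l.2⟩ := (hφ f l).symm
  rw [MulEquiv.trans_apply, MulEquiv.trans_apply, hfl, MulEquiv.symm_apply_apply,
    MulEquiv.symm_apply_apply]
  exact hψ f l

end NormalFSubgroup

section Pi

variable {F ι : Type*} [Group F] {H : ι → Type*} [∀ p, Group (H p)]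
  [∀ p, MulDistribMulAction F (H p)]

variable (H) in
def supportedOn (T : Set ι) : Subgroup (∀ p, H p) where
  carrier := {x | ∀ p ∉ T, x p = 1}
  one_mem' _ _ := rfl
  mul_mem' hx hy p hp := by simp [hx p hp, hy p hp]
  inv_mem' hx p hp := by simp [hx p hp]

lemma supportedOn_mono {T T' : Set ι} (h : T ⊆ T') : supportedOn H T ≤ supportedOn H T' :=
  fun _ hx p hp => hx p fun hpT => hp (h hpT)

variable (F H) in
lemma isNormalFSubgroup_supportedOn (T : Set ι) : IsNormalFSubgroup F (supportedOn H T) := by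
  refine ⟨⟨fun x hx g p hp => ?_⟩, fun f x hx p hp => ?_⟩ <;> simp [hx p hp]

variable (F H) in
lemma isFHom_evalMonoidHom (q : ι) : IsFHom F (Pi.evalMonoidHom H q) :=
  fun _ _ => rfl

variable (F H) in
lemma isFHom_mulSingle [DecidableEq ι] (q : ι) : IsFHom F (MonoidHom.mulSingle H q) :=
  fun f h => funext fun p =>
    (Pi.apply_mulSingle (fun _ => (f • ·)) (fun _ => smul_one f) q h p).symm

lemma mulSingle_mem_supportedOn [DecidableEq ι] {T : Set ι} {q : ι} (hq : q ∈ T) (h : H q) :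
    Pi.mulSingle q h ∈ supportedOn H T := fun p hp =>
  Pi.mulSingle_eq_of_ne (fun hpq : p = q => hp (hpq ▸ hq)) h

lemma mulSingle_eq_self_of_mem_supportedOn_singleton [DecidableEq ι] {q : ι} {x : ∀ p, H p}
    (hx : x ∈ supportedOn H {q}) : Pi.mulSingle q (x q) = x := by
  funext p
  rcases eq_or_ne p q with rfl | hpq
  · exact Pi.mulSingle_eq_same p (x p)
  · rw [Pi.mulSingle_eq_of_ne hpq, hx p hpq]

lemma mul_inv_mulSingle_mem_supportedOn [DecidableEq ι] {T : Set ι} {q : ι} {x : ∀ p, H p}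
    (hx : x ∈ supportedOn H (insert q T)) :
    x * (Pi.mulSingle q (x q))⁻¹ ∈ supportedOn H T := by
  intro p hp
  rcases eq_or_ne p q with rfl | hpq
  · simp
  · simp [Pi.mulSingle_eq_of_ne hpq, hx p (by simp [hpq, hp])]

end Pi

section GraphOnto

variable {F ι : Type*} [Group F] {H : ι → Type*} [∀ p, Group (H p)]
  [∀ p, MulDistribMulAction F (H p)] [DecidableEq ι] {p q : ι} {U : Set ι}
  {L : Subgroup (∀ p, H p)}

variable (F) in
/-- `L` is the graph of an `F`-homomorphism from a normal `F`-subgroup of `∏_{p ∈ U} H p`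
onto `H q`. -/
structure IsGraphOnto (q : ι) (U : Set ι) (L : Subgroup (∀ p, H p)) : Prop where
  isNormalFSubgroup : IsNormalFSubgroup F L
  le_supportedOn : L ≤ supportedOn H (insert q U)
  map_eval : L.map (Pi.evalMonoidHom H q) = ⊤
  comap_mulSingle : L.comap (MonoidHom.mulSingle H q) = ⊥

lemma IsGraphOnto.exists_eval_eq (hL : IsGraphOnto F q U L) (h : H q) : ∃ l ∈ L, l q = h :=
  (hL.map_eval.symm ▸ Subgroup.mem_top h : h ∈ L.map (Pi.evalMonoidHom H q))

lemma not_isGraphOnto_empty [Nontrivial (H q)] (L : Subgroup (∀ p, H p)) :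
    ¬ IsGraphOnto F q ∅ L := by
  intro hL
  obtain ⟨h, hh⟩ := exists_ne (1 : H q)
  obtain ⟨l, hl, rfl⟩ := hL.exists_eval_eq h
  have hlq : l q ∈ L.comap (MonoidHom.mulSingle H q) := by
    change Pi.mulSingle q (l q) ∈ L
    rwa [mulSingle_eq_self_of_mem_supportedOn_singleton (by simpa using hL.le_supportedOn hl)]
  rw [hL.comap_mulSingle] at hlq
  exact hh hlq

lemma IsGraphOnto.exists_of_insert (hq : IsIrreducibleFGroup F (H q)) (hpq : p ≠ q)
    (hL : IsGraphOnto F q (insert p U) L) :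
    (∃ L' : Subgroup (∀ p, H p), IsGraphOnto F q {p} L') ∨
      ∃ L' : Subgroup (∀ p, H p), IsGraphOnto F q U L' := by
  have hLN := hL.isNormalFSubgroup
  have hLp : IsNormalFSubgroup F (L ⊓ supportedOn H {q, p}) :=
    hLN.inf (isNormalFSubgroup_supportedOn F H _)
  rcases hq.2 _ (hLp.map (isFHom_evalMonoidHom F H q) (Function.surjective_eval q))
    with hbot | htop
  -- Otherwise the part of `L` over `{q, p}` is trivial on `H q`, so dividing out the
  -- `p`-coordinates leaves a graph over `U`.
  · right
    have := (isNormalFSubgroup_supportedOn F H {p}).1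
    refine ⟨(L ⊔ supportedOn H {p}) ⊓ supportedOn H (insert q U),
      (hLN.sup (isNormalFSubgroup_supportedOn F H _)).inf (isNormalFSubgroup_supportedOn F H _),
      inf_le_right, ?_, ?_⟩
    · rw [eq_top_iff]
      rintro h -
      obtain ⟨l, hl, rfl⟩ := hL.exists_eval_eq h
      have hlU : l ∈ supportedOn H (insert p (insert q U)) := by
        simpa only [Set.insert_comm] using hL.le_supportedOn hl
      refine ⟨l * (Pi.mulSingle p (l p))⁻¹, Subgroup.mem_inf.2 ⟨?_,
        mul_inv_mulSingle_mem_supportedOn hlU⟩, by simp [Pi.mulSingle_eq_of_ne hpq.symm]⟩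
      exact mul_mem (Subgroup.mem_sup_left hl)
        (inv_mem (Subgroup.mem_sup_right (mulSingle_mem_supportedOn (Set.mem_singleton p) _)))
    · rw [eq_bot_iff]
      intro h hh
      obtain ⟨l, hl, c, hc, hlc⟩ := Subgroup.mem_sup_of_normal_right.mp hh.1
      rw [← eq_mul_inv_iff_mul_eq] at hlc
      have hlLp : l ∈ L ⊓ supportedOn H {q, p} := by
        refine Subgroup.mem_inf.2 ⟨hl, ?_⟩
        rw [hlc]
        exact mul_mem (mulSingle_mem_supportedOn (Set.mem_insert q _) h)
          (inv_mem (supportedOn_mono (by simp) hc))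
      have : h ∈ (L ⊓ supportedOn H {q, p}).map (Pi.evalMonoidHom H q) :=
        ⟨l, hlLp, by simp [hlc, hc q hpq.symm]⟩
      rwa [hbot] at this
  · exact .inl ⟨_, ⟨hLp, inf_le_right, htop,
      eq_bot_iff.2 ((Subgroup.comap_mono inf_le_left).trans hL.comap_mulSingle.le)⟩⟩

lemma IsGraphOnto.symm_singleton [Nontrivial (H q)] (hp : IsIrreducibleFGroup F (H p))
    (hpq : p ≠ q) (hL : IsGraphOnto F q {p} L) : IsGraphOnto F p {q} L := by
  have hLN := hL.isNormalFSubgroup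
  refine ⟨hLN, Set.pair_comm q p ▸ hL.le_supportedOn, ?_, ?_⟩
  · refine (hp.2 _ (hLN.map (isFHom_evalMonoidHom F H p) (Function.surjective_eval p)))
      |>.resolve_left fun hbot => not_isGraphOnto_empty L
        ⟨hLN, fun l hl r hr => ?_, hL.map_eval, hL.comap_mulSingle⟩
    rcases eq_or_ne r p with rfl | hrp
    · have : l r ∈ L.map (Pi.evalMonoidHom H r) := ⟨l, hl, rfl⟩
      rwa [hbot] at this
    · exact hL.le_supportedOn hl r (by simp_all)
  · refine (hp.2 _ (hLN.comap (isFHom_mulSingle F H p))).resolve_right fun htop =>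
      not_isGraphOnto_empty (L ⊓ supportedOn H {q})
        ⟨hLN.inf (isNormalFSubgroup_supportedOn F H _), by simp, ?_,
          eq_bot_iff.2 ((Subgroup.comap_mono inf_le_left).trans hL.comap_mulSingle.le)⟩
    rw [eq_top_iff]
    rintro h -
    obtain ⟨l, hl, rfl⟩ := hL.exists_eval_eq h
    have hlp : l p ∈ L.comap (MonoidHom.mulSingle H p) := htop.symm ▸ Subgroup.mem_top (l p)
    have hlq : l ∈ supportedOn H {p, q} := Set.pair_comm q p ▸ hL.le_supportedOn hl
    exact ⟨l * (Pi.mulSingle p (l p))⁻¹, Subgroup.mem_inf.2 ⟨mul_mem hl (inv_mem hlp),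
      mul_inv_mulSingle_mem_supportedOn hlq⟩, by simp [Pi.mulSingle_eq_of_ne hpq.symm]⟩

lemma IsGraphOnto.bijective_eval (hL : IsGraphOnto F q {p} L) (hL' : IsGraphOnto F p {q} L) :
    Function.Bijective ((Pi.evalMonoidHom H q).comp L.subtype) := by
  refine ⟨(injective_iff_map_eq_one _).2 fun l hl => ?_, fun h => ?_⟩
  · have hlp : Pi.mulSingle p (l.1 p) = l := by
      refine mulSingle_eq_self_of_mem_supportedOn_singleton fun r hr => ?_
      rcases eq_or_ne r q with rfl | hrq
      · exact hl
      · exact hL.le_supportedOn l.2 r (by simp_all)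
    have : l.1 p ∈ L.comap (MonoidHom.mulSingle H p) := by
      change Pi.mulSingle p (l.1 p) ∈ L
      rw [hlp]
      exact l.2
    rw [hL'.comap_mulSingle, Subgroup.mem_bot] at this
    rw [Subtype.ext_iff, ← hlp, this, Pi.mulSingle_one, Subgroup.coe_one]
  · obtain ⟨l, hl, rfl⟩ := hL.exists_eval_eq h
    exact ⟨⟨l, hl⟩, rfl⟩

lemma IsGraphOnto.isFIso (hirr : ∀ p, IsIrreducibleFGroup F (H p)) (hpq : p ≠ q)
    (hL : IsGraphOnto F q {p} L) : IsFIso F (H q) (H p) :=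
  have := (hirr q).1
  have hL' := hL.symm_singleton (hirr p) hpq
  isFIso_of_bijective_restrict hL.isNormalFSubgroup.2 (isFHom_evalMonoidHom F H q)
    (isFHom_evalMonoidHom F H p) (hL.bijective_eval hL') (hL'.bijective_eval hL)

lemma IsGraphOnto.exists_isFIso (hirr : ∀ p, IsIrreducibleFGroup F (H p)) (hU : U.Finite)
    (hL : IsGraphOnto F q U L) : ∃ p ∈ U, IsFIso F (H q) (H p) := by
  induction U, hU using Set.Finite.induction_on generalizing L with
  | empty => exact absurd hL (have := (hirr q).1; not_isGraphOnto_empty L)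
  | @insert p U _ _ ih =>
    rcases eq_or_ne p q with rfl | hpq
    · exact ⟨p, Set.mem_insert p U, MulEquiv.refl _, fun _ _ => rfl⟩
    rcases hL.exists_of_insert (hirr q) hpq with ⟨L', hL'⟩ | ⟨L', hL'⟩
    · exact ⟨p, Set.mem_insert p U, hL'.isFIso hirr hpq⟩
    · obtain ⟨r, hr, hiso⟩ := ih hL'
      exact ⟨r, Set.mem_insert_of_mem p hr, hiso⟩

end GraphOnto

section Splitting

variable {F ι : Type*} [Group F] {H : ι → Type*} [∀ p, Group (H p)]
  [∀ p, MulDistribMulAction F (H p)] [DecidableEq ι] {N : Subgroup (∀ p, H p)}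

lemma mulSingle_apply_mem_of_forall_not_isFIso (hirr : ∀ p, IsIrreducibleFGroup F (H p))
    {q : ι} {P : Set ι} (hP : P.Finite) (hiso : ∀ p ∈ P, ¬ IsFIso F (H q) (H p))
    (hN : IsNormalFSubgroup F N) {x : ∀ p, H p} (hx : x ∈ N)
    (hxP : x ∈ supportedOn H (insert q P)) : Pi.mulSingle q (x q) ∈ N := by
  rcases (hirr q).2 _ (hN.comap (isFHom_mulSingle F H q)) with hK | hK
  · have hL := hN.inf (isNormalFSubgroup_supportedOn F H (insert q P))
    rcases (hirr q).2 _ (hL.map (isFHom_evalMonoidHom F H q) (Function.surjective_eval q))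
      with hbot | htop
    · have : x q ∈ (N ⊓ supportedOn H (insert q P)).map (Pi.evalMonoidHom H q) :=
        ⟨x, Subgroup.mem_inf.2 ⟨hx, hxP⟩, rfl⟩
      rw [hbot, Subgroup.mem_bot] at this
      rw [this, Pi.mulSingle_one]
      exact one_mem N
    · obtain ⟨p, hp, hqp⟩ := IsGraphOnto.exists_isFIso hirr hP ⟨hL, inf_le_right, htop,
        eq_bot_iff.2 ((Subgroup.comap_mono inf_le_left).trans hK.le)⟩
      exact absurd hqp (hiso p hp)
  · exact (hK.symm ▸ Subgroup.mem_top (x q) : x q ∈ N.comap (MonoidHom.mulSingle H q))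

lemma piecewise_mem_of_piecewise_mem_sup (hirr : ∀ p, IsIrreducibleFGroup F (H p))
    {q : ι} {P T : Set ι} [DecidablePred (· ∈ P)] (hT : T.Finite) (hqP : q ∉ P)
    (hiso : ∀ p ∈ P, ¬ IsFIso F (H q) (H p)) (hN : IsNormalFSubgroup F N) {x : ∀ p, H p}
    (hxT : x ∈ supportedOn H (insert q T)) (hx : P.piecewise x 1 ∈ N ⊔ supportedOn H {q}) :
    P.piecewise x 1 ∈ N := by
  have := (isNormalFSubgroup_supportedOn F H {q}).1
  obtain ⟨n, hn, c, hc, hnc⟩ := Subgroup.mem_sup_of_normal_right.mp hx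
  have hnP : n ∈ supportedOn H (insert q (T ∩ P)) := by
    intro p hp
    have hpq : p ≠ q := fun h => hp (h ▸ Set.mem_insert p _)
    have hxp : P.piecewise x 1 p = 1 := by
      by_cases hpP : p ∈ P
      · rw [Set.piecewise_eq_of_mem _ _ _ hpP]
        exact hxT p fun h => hp (h.imp_right fun hpT => ⟨hpT, hpP⟩)
      · simp [hpP]
    rwa [← hnc, Pi.mul_apply, hc p hpq, mul_one] at hxp
  have hnq := mulSingle_apply_mem_of_forall_not_isFIso hirr (hT.inter_of_left P)
    (fun p hp => hiso p hp.2) hN hn hnP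
  have hcq : c = (Pi.mulSingle q (n q))⁻¹ := by
    have hxq : n q * c q = 1 := by
      rw [← Pi.mul_apply, hnc, Set.piecewise_eq_of_notMem _ _ _ hqP, Pi.one_apply]
    rw [← mulSingle_eq_self_of_mem_supportedOn_singleton hc, ← Pi.mulSingle_inv,
      eq_inv_of_mul_eq_one_right hxq]
  rw [← hnc, hcq]
  exact mul_mem hn (inv_mem hnq)

lemma piecewise_mem_of_mem_supportedOn (hirr : ∀ p, IsIrreducibleFGroup F (H p))
    {P : Set ι} [DecidablePred (· ∈ P)]
    (hP : ∀ p q, IsFIso F (H p) (H q) → (p ∈ P ↔ q ∈ P)) {T : Set ι} (hT : T.Finite)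
    (hN : IsNormalFSubgroup F N) {x : ∀ p, H p} (hx : x ∈ N)
    (hxT : x ∈ supportedOn H T) : P.piecewise x 1 ∈ N := by
  induction T, hT using Set.Finite.induction_on generalizing P N x with
  | empty =>
    obtain rfl : x = 1 := funext fun p => hxT p (Set.notMem_empty p)
    rw [Set.piecewise_same]
    exact one_mem N
  | @insert q T _ hT ih =>
    wlog hqP : q ∉ P generalizing P
    · have hx' := this (P := Pᶜ) (fun p r hpr => not_congr (hP p r hpr)) (by simpa using hqP)
      have hsplit : P.piecewise x 1 = x * (Pᶜ.piecewise x 1)⁻¹ := by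
        funext p
        by_cases hp : p ∈ P <;> simp [hp]
      rw [hsplit]
      exact mul_mem hx (inv_mem hx')
    have hy : P.piecewise x 1 ∈ N ⊔ supportedOn H {q} := by
      have hxq : x * (Pi.mulSingle q (x q))⁻¹ ∈ N ⊔ supportedOn H {q} :=
        mul_mem (Subgroup.mem_sup_left hx)
          (inv_mem (Subgroup.mem_sup_right (mulSingle_mem_supportedOn (Set.mem_singleton q) (x q))))
      convert ih hP (hN.sup (isNormalFSubgroup_supportedOn F H _)) hxq
        (mul_inv_mulSingle_mem_supportedOn hxT) using 1
      funext p
      by_cases hp : p ∈ P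
      · simp [hp, Pi.mulSingle_eq_of_ne (ne_of_mem_of_not_mem hp hqP)]
      · simp [hp]
    exact piecewise_mem_of_piecewise_mem_sup hirr hT hqP
      (fun p hp hqp => hqP ((hP q p hqp).2 hp)) hN hxT hy

end Splitting

lemma mulSingle_mem_of_mem {F ι : Type*} [Group F] [Finite ι] [DecidableEq ι] {κ : ι → Type*}
    [∀ i, Finite (κ i)] {G : ι → Type*} [∀ i, Group (G i)]
    [∀ i, MulDistribMulAction F (G i)] (hirr : ∀ i, IsIrreducibleFGroup F (G i))
    (hnoniso : ∀ i j, i ≠ j → ¬ IsFIso F (G i) (G j))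
    {N : Subgroup (∀ i, κ i → G i)} (hN : IsNormalFSubgroup F N) {x : ∀ i, κ i → G i}
    (hx : x ∈ N) (i : ι) : Pi.mulSingle i (x i) ∈ N := by
  classical
  let curry : (∀ p : Σ i, κ i, G p.1) →* ∀ i, κ i → G i :=
    { toFun := fun y i c => y ⟨i, c⟩, map_one' := rfl, map_mul' := fun _ _ => rfl }
  have hP (p q : Σ i, κ i) (hpq : IsFIso F (G p.1) (G q.1)) : p.1 = i ↔ q.1 = i := by
    rw [of_not_not fun hne => hnoniso _ _ hne hpq]
  have hmem := piecewise_mem_of_mem_supportedOn (fun p => hirr p.1) (P := {p | p.1 = i}) hP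
    (Set.toFinite Set.univ) (hN.comap (φ := curry) fun _ _ => rfl) (x := fun p => x p.1 p.2) hx
    fun p hp => absurd (Set.mem_univ p) hp
  convert Subgroup.mem_comap.mp hmem using 1
  funext j c
  rcases eq_or_ne j i with rfl | hji
  · simp [curry]
  · simp [curry, hji]

/-- normal `F`-subgroups of products split as products of their
block projections. -/
theorem normalFSubgroup_eq_prod_of_proj
    {F : Type*} [Group F] {k : ℕ} (G : Fin k → Type*)
    [∀ i, Group (G i)] [∀ i, MulDistribMulAction F (G i)]
    (hirr : ∀ i, IsIrreducibleFGroup F (G i))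
    (hnoniso : ∀ i j, i ≠ j → ¬ IsFIso F (G i) (G j))
    (m : Fin k → ℕ)
    (N : Subgroup (∀ i, Fin (m i) → G i))
    (hN : IsNormalFSubgroup F N) :
    (∀ i, IsNormalFSubgroup F
        (Subgroup.map (Pi.evalMonoidHom (fun i => Fin (m i) → G i) i) N)) ∧
    ∀ x : ∀ i, Fin (m i) → G i,
      x ∈ N ↔ ∀ i, x i ∈
        Subgroup.map (Pi.evalMonoidHom (fun i => Fin (m i) → G i) i) N := by
  refine ⟨fun i => hN.map (fun _ _ => rfl) (Function.surjective_eval i),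
    fun x => ⟨fun hx i => ⟨x, hx, rfl⟩, fun hx => ?_⟩⟩
  refine Subgroup.pi_mem_of_mulSingle_mem x fun i => ?_
  obtain ⟨w, hw, hwx⟩ := hx i
  rw [← hwx]
  exact mulSingle_mem_of_mem hirr hnoniso hN hw i
end

section
/- Let G be a finite group and let N be a normal subgroup of G. Let M be the intersection of all subgroups of N that are normal in G and maximal among the proper subgroups of N that are normal in G. Then M is normal in G, and the quotient N/M, regarded as a (G/M)-group via the conjugation action, is isomorphic as a (G/M)-group to a finite direct product of irreducible (G/M)-groups; moreover, for each abelian irreducible factor in this product, the conjugation action of the image of N in G/M on that factor is trivial (so the (G/M)-action on it factors through G/N). -/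
/-- The intersection of all subgroups of `N` that are normal in `G` and maximal among
the proper subgroups of `N` normal in `G` (intersected with `N` itself). -/
def maxNormalCore {G : Type*} [Group G] (N : Subgroup G) : Subgroup G :=
  N ⊓ sInf {K : Subgroup G | K.Normal ∧ K < N ∧
    ∀ K' : Subgroup G, K'.Normal → K' ≤ N → K < K' → K' = N}

instance maxNormalCore_normal {G : Type*} [Group G] (N : Subgroup G) [hN : N.Normal] :
    (maxNormalCore N).Normal := by
  constructor
  intro x hx g
  rw [maxNormalCore, Subgroup.mem_inf, Subgroup.mem_sInf] at hx ⊢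
  exact ⟨hN.conj_mem x hx.1 g, fun K hK => hK.1.conj_mem x (hx.2 K hK) g⟩

instance map_mk'_normal {G : Type*} [Group G] (M N : Subgroup G) [M.Normal]
    [hN : N.Normal] : (N.map (QuotientGroup.mk' M)).Normal :=
  hN.map _ (QuotientGroup.mk'_surjective M)

/-!
Write `X = N ⧸ M` with the conjugation action of `F = G ⧸ M`. The images `K ⧸ M` of the maximal
`G`-normal subgroups `K < N` are maximal normal `F`-subgroups of `X` intersecting trivially. Pick a
family `K₁, …, Kᵣ` of maximal normal `F`-subgroups of `X` with trivial intersection and `r` minimal.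
By minimality no `Kᵢ` contains `⋂_{j ≠ i} Kⱼ`, so by maximality `(⋂_{j ≠ i} Kⱼ) Kᵢ = X`, and the
Chinese remainder map `X → ∏ X ⧸ Kᵢ` is an `F`-isomorphism onto a product of irreducible
`F`-groups. An element of `N ⧸ M` acts on `X` as an inner automorphism, hence on each factor as
conjugation, which is trivial on an abelian factor.
-/

open QuotientGroup

section FGroup

variable {F X : Type*} [Group F] [Group X] [MulDistribMulAction F X]

variable (F) in
structure IsMaximalNormalFSubgroup (K : Subgroup X) : Prop where
  isNormalFSubgroup : IsNormalFSubgroup F K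
  ne_top : K ≠ ⊤
  eq_top_of_lt : ∀ H : Subgroup X, IsNormalFSubgroup F H → K < H → H = ⊤

variable (F X) in
def IsProdIrreducibleFGroup : Prop :=
  ∃ (r : ℕ) (D : Fin r → Type) (_ : ∀ i, Group (D i))
    (_ : ∀ i, MulDistribMulAction F (D i)),
    (∀ i, IsIrreducibleFGroup F (D i)) ∧ IsFIso F X (∀ i, D i)

theorem IsNormalFSubgroup.iInf {ι : Sort*} {K : ι → Subgroup X}
    (hK : ∀ i, IsNormalFSubgroup F (K i)) : IsNormalFSubgroup F (⨅ i, K i) :=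
  ⟨Subgroup.normal_iInf_normal fun i => (hK i).1, fun f x hx =>
    Subgroup.mem_iInf.2 fun i => (hK i).2 f x (Subgroup.mem_iInf.1 hx i)⟩

theorem IsNormalFSubgroup.sup_s11 {H K : Subgroup X} (hH : IsNormalFSubgroup F H)
    (hK : IsNormalFSubgroup F K) : IsNormalFSubgroup F (H ⊔ K) := by
  have := hH.1
  have := hK.1
  refine ⟨inferInstance, fun f x hx => ?_⟩
  obtain ⟨h, hh, k, hk, rfl⟩ := Subgroup.mem_sup_of_normal_right.1 hx
  rw [smul_mul']
  exact Subgroup.mul_mem_sup (hH.2 f h hh) (hK.2 f k hk)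

theorem IsIrreducibleFGroup.of_fIso {Y Z : Type*} [Group Y] [Group Z]
    [MulDistribMulAction F Y] [MulDistribMulAction F Z] (hYZ : IsFIso F Y Z)
    (hZ : IsIrreducibleFGroup F Z) : IsIrreducibleFGroup F Y := by
  obtain ⟨e, he⟩ := hYZ
  have := hZ.1
  refine ⟨e.toEquiv.nontrivial, fun H hH => ?_⟩
  have hmap : IsNormalFSubgroup F (H.map e.toMonoidHom) :=
    ⟨hH.1.map _ e.surjective, by
      rintro f _ ⟨x, hx, rfl⟩
      exact ⟨f • x, hH.2 f x hx, he f x⟩⟩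
  refine (hZ.2 _ hmap).imp (fun h => ?_) (fun h => ?_)
  · exact (Subgroup.map_eq_bot_iff_of_injective H e.injective).1 h
  · rw [← Subgroup.comap_map_eq_self_of_injective (f := e.toMonoidHom) e.injective H, h,
      Subgroup.comap_top]

abbrev quotientAction (K : Subgroup X) [K.Normal]
    (hK : ∀ (f : F) (x : X), x ∈ K → f • x ∈ K) : MulDistribMulAction F (X ⧸ K) where
  smul f := map K K (MulDistribMulAction.toMonoidHom X f) (hK f)
  one_smul q := by
    induction q using QuotientGroup.induction_on with
    | H x => exact congrArg ((↑) : X → X ⧸ K) (one_smul F x)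
  mul_smul f g q := by
    induction q using QuotientGroup.induction_on with
    | H x => exact congrArg ((↑) : X → X ⧸ K) (mul_smul f g x)
  smul_mul f := map_mul _
  smul_one f := map_one _

theorem IsMaximalNormalFSubgroup.isIrreducibleFGroup_quotient {K : Subgroup X} [K.Normal]
    (hK : IsMaximalNormalFSubgroup F K) :
    letI := quotientAction K hK.isNormalFSubgroup.2
    IsIrreducibleFGroup F (X ⧸ K) := by
  let := quotientAction K hK.isNormalFSubgroup.2
  refine ⟨QuotientGroup.nontrivial_iff.2 hK.ne_top, fun B hB => ?_⟩
  have hC : IsNormalFSubgroup F (B.comap (mk' K)) :=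
    ⟨hB.1.comap _, fun f x hx => hB.2 f (x : X ⧸ K) hx⟩
  have hKC : K ≤ B.comap (mk' K) := fun k hk => by
    simp [(QuotientGroup.eq_one_iff k).2 hk]
  rw [← Subgroup.map_comap_eq_self_of_surjective (mk'_surjective K) B]
  rcases hKC.eq_or_lt with h | h
  · left
    exact h ▸ map_mk'_self K
  · right
    rw [hK.eq_top_of_lt _ hC h, Subgroup.map_top_of_surjective _ (mk'_surjective K)]

theorem pi_mk'_surjective_of_iInf_sup_eq_top {ι : Type*} [Finite ι] (K : ι → Subgroup X)
    [∀ i, (K i).Normal] (hK : ∀ i, (⨅ (j) (_ : j ≠ i), K j) ⊔ K i = ⊤) :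
    Function.Surjective (MonoidHom.pi fun i => mk' (K i)) := by
  classical
  intro y
  refine Subgroup.pi_mem_of_mulSingle_mem (H := (MonoidHom.pi fun i => mk' (K i)).range) y
    fun i => ?_
  obtain ⟨a, ha⟩ := mk_surjective (y i)
  obtain ⟨l, hl, k, hk, rfl⟩ := Subgroup.mem_sup_of_normal_right.1 (hK i ▸ Subgroup.mem_top a)
  refine ⟨l, funext fun j => ?_⟩
  by_cases hji : j = i
  · subst hji
    simp [← ha, mk_mul_of_mem l hk]
  · have hlj : l ∈ K j := Subgroup.mem_iInf.1 (Subgroup.mem_iInf.1 hl j) hji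
    simp [hji, (QuotientGroup.eq_one_iff l).2 hlj]

theorem exists_irredundant_maximalNormalFSubgroups [Finite X]
    (hX : sInf {K : Subgroup X | IsMaximalNormalFSubgroup F K} = ⊥) :
    ∃ (r : ℕ) (K : Fin r → Subgroup X), (∀ i, IsMaximalNormalFSubgroup F (K i)) ∧
      ⨅ i, K i = ⊥ ∧ ∀ i, (⨅ (j) (_ : j ≠ i), K j) ⊔ K i = ⊤ := by
  classical
  let P (r : ℕ) : Prop := ∃ K : Fin r → Subgroup X,
    (∀ i, IsMaximalNormalFSubgroup F (K i)) ∧ ⨅ i, K i = ⊥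
  have hP : ∃ r, P r := by
    obtain ⟨r, ⟨σ⟩⟩ :=
      Finite.exists_equiv_fin {K : Subgroup X | IsMaximalNormalFSubgroup F K}
    refine ⟨r, fun i => σ.symm i, fun i => (σ.symm i).2, ?_⟩
    rw [← hX, sInf_eq_iInf', ← σ.symm.iInf_comp]
  obtain ⟨r, hmin, K, hK, hbot⟩ : ∃ r, (∀ s < r, ¬ P s) ∧ P r :=
    ⟨Nat.find hP, fun s => Nat.find_min hP, Nat.find_spec hP⟩
  refine ⟨r, K, hK, hbot, fun i => ?_⟩
  cases r with
  | zero => exact i.elim0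
  | succ r =>
  have hL : IsNormalFSubgroup F (⨅ (j) (_ : j ≠ i), K j) :=
    .iInf fun j => .iInf fun _ => (hK j).isNormalFSubgroup
  refine (hK i).eq_top_of_lt _ (hL.sup_s11 (hK i).isNormalFSubgroup) (right_lt_sup.2 fun hle => ?_)
  refine hmin r r.lt_succ_self ⟨K ∘ i.succAbove, fun j => hK _, eq_bot_iff.2 ?_⟩
  have hrest : ⨅ j, K (i.succAbove j) ≤ ⨅ (j) (_ : j ≠ i), K j :=
    le_iInf₂ fun j hj => (Fin.exists_succAbove_eq hj).elim fun k hk => hk ▸ iInf_le _ k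
  refine hbot ▸ le_iInf fun j => ?_
  by_cases hj : j = i
  · exact hj ▸ hrest.trans hle
  · obtain ⟨k, rfl⟩ := Fin.exists_succAbove_eq hj
    exact iInf_le _ k

theorem IsProdIrreducibleFGroup.of_fIso_pi {r : ℕ} {Y : Fin r → Type*} [∀ i, Group (Y i)]
    [∀ i, MulDistribMulAction F (Y i)] [∀ i, Small.{0} (Y i)]
    (hY : ∀ i, IsIrreducibleFGroup F (Y i)) (hXY : IsFIso F X (∀ i, Y i)) :
    IsProdIrreducibleFGroup F X := by
  let act i : MulDistribMulAction F (Shrink.{0} (Y i)) :=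
    (equivShrink (Y i)).symm.mulDistribMulAction F
  have hshrink i (f : F) (s : Shrink.{0} (Y i)) :
      Shrink.mulEquiv (f • s) = f • Shrink.mulEquiv s :=
    (equivShrink _).symm.apply_symm_apply _
  obtain ⟨e, he⟩ := hXY
  refine ⟨r, fun i => Shrink.{0} (Y i), inferInstance, act,
    fun i => (hY i).of_fIso ⟨Shrink.mulEquiv, hshrink i⟩,
    e.trans (MulEquiv.piCongrRight fun i => Shrink.mulEquiv.symm), fun f x => funext fun i => ?_⟩
  apply Shrink.mulEquiv.injective
  simp [hshrink, he]

theorem isProdIrreducibleFGroup_of_sInf_eq_bot [Finite X]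
    (hX : sInf {K : Subgroup X | IsMaximalNormalFSubgroup F K} = ⊥) :
    IsProdIrreducibleFGroup F X := by
  obtain ⟨r, K, hK, hbot, hsup⟩ := exists_irredundant_maximalNormalFSubgroups hX
  have := fun i => (hK i).isNormalFSubgroup.1
  let := fun i => quotientAction (K i) (hK i).isNormalFSubgroup.2
  let φ := MonoidHom.pi fun i => mk' (K i)
  have hinj : Function.Injective φ := (injective_iff_map_eq_one φ).2 fun x hx => by
    rw [← Subgroup.mem_bot, ← hbot, Subgroup.mem_iInf]
    exact fun i => (QuotientGroup.eq_one_iff x).1 (congrFun hx i)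
  exact .of_fIso_pi (fun i => (hK i).isIrreducibleFGroup_quotient)
    ⟨MulEquiv.ofBijective φ ⟨hinj, pi_mk'_surjective_of_iInf_sup_eq_top K hsup⟩,
      fun _ _ => rfl⟩

theorem smul_eq_self_of_smul_eq_conj {ι : Type*} [DecidableEq ι] {D : ι → Type*}
    [∀ i, Group (D i)] [∀ i, MulDistribMulAction F (D i)] (e : X ≃* ∀ i, D i)
    (he : ∀ (f : F) (x : X), e (f • x) = f • e x) {f : F} {y : X}
    (hf : ∀ x, f • x = y * x * y⁻¹) {i : ι} (hi : ∀ a b : D i, a * b = b * a) (d : D i) :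
    f • d = d := by
  have h := congrFun (he f (e.symm (Pi.mulSingle i d))) i
  rw [hf, map_mul, map_mul, map_inv, e.apply_symm_apply] at h
  simpa [hi _ d, Pi.smul_apply] using h.symm

end FGroup

section Conjugation

variable {G : Type*} [Group G]

abbrev conjAction (N : Subgroup G) [N.Normal] : MulDistribMulAction G N :=
  MulDistribMulAction.compHom N (MulAut.conjNormal (H := N))

attribute [local instance] conjAction

variable {N : Subgroup G} [N.Normal]

@[simp]
theorem coe_conjAction_smul (g : G) (x : N) : ((g • x : N) : G) = g * x * g⁻¹ :=
  MulAut.conjNormal_apply g x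

theorem isNormalFSubgroup_subgroupOf (K : Subgroup G) [hK : K.Normal] :
    IsNormalFSubgroup G (K.subgroupOf N) :=
  ⟨hK.subgroupOf N, fun g x hx => by
    simpa [Subgroup.mem_subgroupOf] using hK.conj_mem _ hx g⟩

theorem IsNormalFSubgroup.normal_map_subtype {H : Subgroup N} (hH : IsNormalFSubgroup G H) :
    (H.map N.subtype).Normal :=
  ⟨by rintro _ ⟨x, hx, rfl⟩ g; exact ⟨_, hH.2 g x hx, coe_conjAction_smul g x⟩⟩

variable {M : Subgroup G} [M.Normal]

theorem mem_of_mk'_mem_map {K : Subgroup G} (hMK : M ≤ K) {g : G}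
    (hg : mk' M g ∈ K.map (mk' M)) : g ∈ K := by
  rwa [← Subgroup.mem_comap, Subgroup.comap_map_eq, ker_mk', sup_eq_left.2 hMK] at hg

theorem isMaximalNormalFSubgroup_map_subgroupOf {K : Subgroup G} [K.Normal] (hMK : M ≤ K)
    (hKN : K < N) (hmax : ∀ K' : Subgroup G, K'.Normal → K' ≤ N → K < K' → K' = N) :
    IsMaximalNormalFSubgroup (G ⧸ M) ((K.map (mk' M)).subgroupOf (N.map (mk' M))) where
  isNormalFSubgroup := isNormalFSubgroup_subgroupOf _
  ne_top htop := by
    refine hKN.not_ge fun n hn => mem_of_mk'_mem_map hMK ?_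
    have hmem : (⟨mk' M n, Subgroup.mem_map_of_mem _ hn⟩ : N.map (mk' M)) ∈
        (K.map (mk' M)).subgroupOf (N.map (mk' M)) := htop ▸ Subgroup.mem_top _
    exact hmem
  eq_top_of_lt H hH hlt := by
    set C := (H.map (N.map (mk' M)).subtype).comap (mk' M)
    have hCN : C ≤ N := fun c hc => by
      obtain ⟨x, -, hx⟩ := hc
      exact mem_of_mk'_mem_map (hMK.trans hKN.le) (hx ▸ x.2)
    have hKC : K < C := by
      refine SetLike.lt_iff_le_and_exists.2 ⟨fun k hk => ?_, ?_⟩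
      · exact ⟨⟨mk' M k, Subgroup.mem_map_of_mem _ (hKN.le hk)⟩,
          hlt.le (Subgroup.mem_map_of_mem _ hk), rfl⟩
      · obtain ⟨x, hxH, hxK⟩ := SetLike.exists_of_lt hlt
        obtain ⟨n, -, hn⟩ := x.2
        refine ⟨n, ⟨x, hxH, hn.symm⟩, fun hnK => hxK ?_⟩
        exact Subgroup.mem_subgroupOf.2 (hn ▸ Subgroup.mem_map_of_mem _ hnK)
    have hCeq : C = N := hmax C (hH.normal_map_subtype.comap _) hCN hKC
    refine eq_top_iff.2 fun x _ => ?_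
    obtain ⟨n, hn, hnx⟩ := x.2
    obtain ⟨y, hy, hyx⟩ := (hCeq ▸ hn : n ∈ C)
    exact Subtype.ext (hyx.trans hnx) ▸ hy

theorem sInf_maximalNormalFSubgroup_map_maxNormalCore_eq_bot (N : Subgroup G) [N.Normal] :
    sInf {K : Subgroup (N.map (mk' (maxNormalCore N))) |
      IsMaximalNormalFSubgroup (G ⧸ maxNormalCore N) K} = ⊥ := by
  rw [eq_bot_iff]
  rintro ⟨_, n, hn, rfl⟩ hx
  refine Subtype.ext ((QuotientGroup.eq_one_iff n).2 ⟨hn, Subgroup.mem_sInf.2 fun K hK => ?_⟩)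
  have := hK.1
  have hMK : maxNormalCore N ≤ K := inf_le_right.trans (sInf_le hK)
  refine mem_of_mk'_mem_map hMK (Subgroup.mem_subgroupOf.1 (Subgroup.mem_sInf.1 hx _ ?_))
  exact isMaximalNormalFSubgroup_map_subgroupOf hMK hK.2.1 hK.2.2

end Conjugation

/-- with `M` the intersection of the maximal proper `G`-normal
subgroups of `N`, the subgroup `M` is normal in `G` and `N/M`, with the conjugation
action of `G/M`, is isomorphic as a `(G/M)`-group to a finite direct product of
irreducible `(G/M)`-groups, in which every abelian factor receives a trivial action
from the image of `N`. -/
theorem quotient_by_maxNormalCore_prod_irreducible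
    {G : Type*} [Group G] [Finite G] (N : Subgroup G) [N.Normal] :
    (maxNormalCore N).Normal ∧
    ∃ (r : ℕ) (D : Fin r → Type) (_grp : ∀ i, Group (D i))
      (_act : ∀ i, MulDistribMulAction (G ⧸ maxNormalCore N) (D i)),
      (∀ i, IsIrreducibleFGroup (G ⧸ maxNormalCore N) (D i)) ∧
      ∃ e : (N.map (QuotientGroup.mk' (maxNormalCore N))) ≃* (∀ i, D i),
        (∀ (q : G ⧸ maxNormalCore N)
            (x : N.map (QuotientGroup.mk' (maxNormalCore N))),
          e (MulAut.conjNormal q x) = q • e x) ∧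
        (∀ i, (∀ a b : D i, a * b = b * a) →
          ∀ q ∈ N.map (QuotientGroup.mk' (maxNormalCore N)), ∀ d : D i, q • d = d) := by
  let := conjAction (N.map (mk' (maxNormalCore N)))
  obtain ⟨r, D, grp, act, hirr, e, he⟩ :=
    isProdIrreducibleFGroup_of_sInf_eq_bot
      (sInf_maximalNormalFSubgroup_map_maxNormalCore_eq_bot N)
  refine ⟨inferInstance, r, D, grp, act, hirr, e, he, fun i hi q hq d => ?_⟩
  exact smul_eq_self_of_smul_eq_conj e he (y := ⟨q, hq⟩) (fun x => Subtype.ext (by simp)) hi d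
end

section
/- Let F be a group, let G₁,…,G_k be finite irreducible F-groups such that G_i and G_j are not isomorphic as F-groups for i ≠ j, and let m₁,…,m_k be non-negative integers. If G_j is abelian, then the number of surjective F-group morphisms from ∏_{i=1}^k G_i^{m_i} to G_j equals h_F(G_j)^{m_j} − 1. -/
abbrev FHom (F A B : Type*) [Group F] [Group A] [Group B] [MulDistribMulAction F A]
    [MulDistribMulAction F B] : Type _ :=
  {φ : A →* B // IsFHom F φ}

section

variable {F : Type*} [Group F]

-- Both sides are `0` when `X` is infinite.
theorem Nat.card_subtype_ne {X : Type*} (a : X) : Nat.card {x // x ≠ a} = Nat.card X - 1 := by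
  rw [← Set.ncard_univ X, ← Set.ncard_sdiff_singleton_of_mem (Set.mem_univ a),
    ← Nat.card_coe_set_eq]
  exact Nat.card_congr (Equiv.subtypeEquivRight (by simp))

theorem Pi.smul_mulSingle {I : Type*} [DecidableEq I] {M : I → Type*}
    [∀ i, Monoid (M i)] [∀ i, MulDistribMulAction F (M i)] (f : F) (i : I) (x : M i) :
    f • Pi.mulSingle i x = Pi.mulSingle i (f • x) := by
  ext i'
  rcases eq_or_ne i' i with rfl | h
  · simp
  · simp [Pi.mulSingle_eq_of_ne h]

section Morphisms

variable {A B : Type*} [Group A] [MulDistribMulAction F A]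

theorem isFHom_one [Group B] [MulDistribMulAction F B] : IsFHom F (1 : A →* B) :=
  fun _ _ => (smul_one _).symm

theorem IsFHom.isNormalFSubgroup_ker [Group B] [MulDistribMulAction F B] {φ : A →* B}
    (hφ : IsFHom F φ) : IsNormalFSubgroup F φ.ker :=
  ⟨φ.normal_ker, fun f x hx => by rw [MonoidHom.mem_ker, hφ, hx, smul_one]⟩

theorem IsFHom.isNormalFSubgroup_range [CommGroup B] [MulDistribMulAction F B] {φ : A →* B}
    (hφ : IsFHom F φ) : IsNormalFSubgroup F φ.range :=
  ⟨inferInstance, by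
    rintro f _ ⟨x, rfl⟩
    exact ⟨f • x, hφ f x⟩⟩

variable [CommGroup B] [MulDistribMulAction F B]

theorem IsIrreducibleFGroup.surjective_iff_ne_one (hB : IsIrreducibleFGroup F B) {φ : A →* B}
    (hφ : IsFHom F φ) : Function.Surjective φ ↔ φ ≠ 1 := by
  have : Nontrivial B := hB.1
  refine ⟨?_, fun hne => ?_⟩
  · rintro hsurj rfl
    obtain ⟨b, hb⟩ := exists_ne (1 : B)
    obtain ⟨a, rfl⟩ := hsurj b
    exact hb rfl
  · rcases hB.2 _ hφ.isNormalFSubgroup_range with h | h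
    · exact absurd (MonoidHom.range_eq_bot_iff.mp h) hne
    · exact MonoidHom.range_eq_top.mp h

theorem IsFHom.eq_one_of_not_isFIso (hA : IsIrreducibleFGroup F A) (hB : IsIrreducibleFGroup F B)
    (hAB : ¬ IsFIso F A B) {φ : A →* B} (hφ : IsFHom F φ) : φ = 1 := by
  by_contra hne
  have hsurj := (hB.surjective_iff_ne_one hφ).mpr hne
  rcases hA.2 _ hφ.isNormalFSubgroup_ker with h | h
  · exact hAB ⟨.ofBijective φ ⟨φ.ker_eq_bot_iff.mp h, hsurj⟩, hφ⟩
  · exact hne (MonoidHom.ker_eq_top_iff.mp h)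

theorem card_fHom_eq_one_of_not_isFIso (hA : IsIrreducibleFGroup F A)
    (hB : IsIrreducibleFGroup F B) (hAB : ¬ IsFIso F A B) : Nat.card (FHom F A B) = 1 :=
  Nat.card_eq_one_iff_unique.mpr
    ⟨⟨fun φ ψ => Subtype.ext <| (φ.2.eq_one_of_not_isFIso hA hB hAB).trans
      (ψ.2.eq_one_of_not_isFIso hA hB hAB).symm⟩, ⟨⟨1, isFHom_one⟩⟩⟩

theorem card_surjective_fHom (hB : IsIrreducibleFGroup F B) :
    Nat.card {φ : A →* B // IsFHom F φ ∧ Function.Surjective φ} =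
      Nat.card (FHom F A B) - 1 := by
  rw [← Nat.card_subtype_ne (⟨1, isFHom_one⟩ : FHom F A B)]
  exact Nat.card_congr
    { toFun := fun φ => ⟨⟨φ.1, φ.2.1⟩,
        fun h => (hB.surjective_iff_ne_one φ.2.1).mp φ.2.2 (congrArg Subtype.val h)⟩
      invFun := fun φ => ⟨φ.1.1, φ.1.2,
        (hB.surjective_iff_ne_one φ.1.2).mpr fun h => φ.2 (Subtype.ext h)⟩ }

end Morphisms

section Products

variable {I : Type*} (M : I → Type*) [∀ i, Group (M i)] (B : Type*) [CommGroup B]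

theorem pairwise_commute_of_commGroup (ψ : ∀ i, M i →* B) :
    Pairwise fun i j => ∀ x y, Commute (ψ i x) (ψ j y) :=
  fun _ _ _ _ _ => Commute.all _ _

variable [Fintype I] [DecidableEq I] [∀ i, MulDistribMulAction F (M i)] [MulDistribMulAction F B]

theorem isFHom_pi_iff (φ : (∀ i, M i) →* B) :
    IsFHom F φ ↔ ∀ i, IsFHom F (φ.comp (MonoidHom.mulSingle M i)) := by
  refine ⟨fun hφ i f x => ?_, fun h f => ?_⟩
  · change φ (Pi.mulSingle i (f • x)) = f • φ (Pi.mulSingle i x)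
    rw [← Pi.smul_mulSingle, hφ]
  · have := MonoidHom.pi_ext (f := φ.comp (MulDistribMulAction.toMonoidHom _ f))
      (g := (MulDistribMulAction.toMonoidHom B f).comp φ) fun i x => by
        simpa [Pi.smul_mulSingle] using h i f x
    exact DFunLike.congr_fun this

def fHomPiEquiv : FHom F (∀ i, M i) B ≃ ∀ i, FHom F (M i) B where
  toFun φ i := ⟨φ.1.comp (MonoidHom.mulSingle M i), (isFHom_pi_iff M B φ.1).mp φ.2 i⟩
  invFun ψ :=
    ⟨MonoidHom.noncommPiCoprod (fun i => (ψ i).1) (pairwise_commute_of_commGroup M B _),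
      (isFHom_pi_iff M B _).mpr fun i => by
        convert (ψ i).2
        exact MonoidHom.ext fun _ => by simp [MonoidHom.noncommPiCoprod_mulSingle]⟩
  left_inv φ := Subtype.ext <| MonoidHom.pi_ext fun _ _ => by
    simp [MonoidHom.noncommPiCoprod_mulSingle]
  right_inv ψ := funext fun _ => Subtype.ext <| MonoidHom.ext fun _ => by
    simp [MonoidHom.noncommPiCoprod_mulSingle]

theorem card_fHom_pi : Nat.card (FHom F (∀ i, M i) B) = ∏ i, Nat.card (FHom F (M i) B) := by
  rw [Nat.card_congr (fHomPiEquiv M B), Nat.card_pi]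

end Products

end

theorem count_surjections_abelian_general
    {F : Type*} [Group F] {k : ℕ} (G : Fin k → Type*)
    [∀ i, Group (G i)] [∀ i, MulDistribMulAction F (G i)]
    (hirr : ∀ i, IsIrreducibleFGroup F (G i))
    (hnoniso : ∀ i j, i ≠ j → ¬ IsFIso F (G i) (G j))
    (m : Fin k → ℕ) (j : Fin k)
    (hab : ∀ a b : G j, a * b = b * a) :
    Nat.card {φ : (∀ i, Fin (m i) → G i) →* G j //
        IsFHom F φ ∧ Function.Surjective φ} = hF F (G j) ^ (m j) - 1 := by
  let _ : CommGroup (G j) := { (inferInstance : Group (G j)) with mul_comm := hab }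
  have hother : ∀ i ≠ j, Nat.card (FHom F (G i) (G j)) ^ m i = 1 := fun i hi => by
    rw [card_fHom_eq_one_of_not_isFIso (hirr i) (hirr j) (hnoniso i j hi), one_pow]
  rw [card_surjective_fHom (hirr j), card_fHom_pi]
  simp only [card_fHom_pi, Finset.prod_const, Finset.card_univ, Fintype.card_fin]
  rw [Finset.prod_eq_single j (fun i _ => hother i) (by simp)]
  rfl

/-- the number of surjective `F`-group morphisms
`∏ᵢ Gᵢ^{mᵢ} → G_j` with `G_j` abelian is `h_F(G_j)^{m_j} − 1`. -/
theorem count_surjections_abelian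
    {F : Type*} [Group F] {k : ℕ} (G : Fin k → Type*)
    [∀ i, Group (G i)] [∀ i, MulDistribMulAction F (G i)] [∀ i, Finite (G i)]
    (hirr : ∀ i, IsIrreducibleFGroup F (G i))
    (hnoniso : ∀ i j, i ≠ j → ¬ IsFIso F (G i) (G j))
    (m : Fin k → ℕ) (j : Fin k)
    (hab : ∀ a b : G j, a * b = b * a) :
    Nat.card {φ : (∀ i, Fin (m i) → G i) →* G j //
        IsFHom F φ ∧ Function.Surjective φ} = hF F (G j) ^ (m j) - 1 :=
  count_surjections_abelian_general G hirr hnoniso m j hab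
end
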